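/- Let r₁, r₂, a₀, a₁, a₂ ∈ ℂ and let R: ℝ → ℂ be a C^∞ function with R(0) = R′(0) = R″(0) = 0 (i.e. R(ε) = O(ε³) as ε → 0). For ε ∈ ℝ and γ ∈ ℂ define the quadratic polynomial Q̃(γ; ε) = (i/2 − γ)² + ε²·( −1/8 + r₁·(i/2 − γ)² + r₂·(i/2 − γ) ) + R(ε)·(a₀ + a₁γ + a₂γ²). Then there exist ε₀ > 0 and C^∞ functions κ₊, κ₋ : (−ε₀, ε₀) → ℂ with κ₊(0) = 1/(2√2) and κ₋(0) = −1/(2√2), such that for every ε with 0 < |ε| < ε₀ the numbers γ₊(ε) = i/2 + ε·κ₊(ε) and γ₋(ε) = i/2 + ε·κ₋(ε) are distinct, satisfy Q̃(γ_±(ε); ε) = 0, and are simple roots: ∂_γ Q̃(γ_±(ε); ε) ≠ 0. -/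

import Mathlib

open Complex Set

noncomputable section

/-- The quadratic polynomial
`Q̃(γ; ε) = (i/2 − γ)² + ε²·(−1/8 + r₁(i/2 − γ)² + r₂(i/2 − γ)) + R(ε)·(a₀ + a₁γ + a₂γ²)`. -/
def Qt (r₁ r₂ a₀ a₁ a₂ : ℂ) (R : ℝ → ℂ) (γ : ℂ) (ε : ℝ) : ℂ :=
  (Complex.I / 2 - γ) ^ 2 +
    ((ε : ℂ)) ^ 2 * (-(1/8 : ℂ) + r₁ * (Complex.I / 2 - γ) ^ 2 + r₂ * (Complex.I / 2 - γ)) +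
    R ε * (a₀ + a₁ * γ + a₂ * γ ^ 2)

namespace S15

open Filter Topology

def AA (r₁ a₂ : ℂ) (T : ℝ → ℂ) (ε : ℝ) : ℂ := 1 + r₁ * (ε:ℂ)^2 + a₂ * (ε:ℂ)^2 * T ε

def BB (r₂ a₁ a₂ : ℂ) (T : ℝ → ℂ) (ε : ℝ) : ℂ :=
  -r₂ * (ε:ℂ) + (a₁ + a₂ * Complex.I) * (ε:ℂ) * T ε

def CC (a₀ a₁ a₂ : ℂ) (T : ℝ → ℂ) (ε : ℝ) : ℂ :=
  -(1/8:ℂ) + (a₀ + a₁ * (Complex.I/2) + a₂ * (Complex.I/2)^2) * T ε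

def DD (r₁ r₂ a₀ a₁ a₂ : ℂ) (T : ℝ → ℂ) (ε : ℝ) : ℂ :=
  BB r₂ a₁ a₂ T ε ^ 2 - 4 * AA r₁ a₂ T ε * CC a₀ a₁ a₂ T ε

def ss (r₁ r₂ a₀ a₁ a₂ : ℂ) (T : ℝ → ℂ) (ε : ℝ) : ℂ :=
  Complex.exp (Complex.log (DD r₁ r₂ a₀ a₁ a₂ T ε) / 2)

variable {r₁ r₂ a₀ a₁ a₂ : ℂ} {T R : ℝ → ℂ}

theorem quad_eval (hRT : ∀ y : ℝ, R y = (y:ℂ)^2 * T y) (κ : ℂ) (ε : ℝ) :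
    Qt r₁ r₂ a₀ a₁ a₂ R (Complex.I/2 + (ε:ℂ) * κ) ε =
      (ε:ℂ)^2 * (AA r₁ a₂ T ε * κ^2 + BB r₂ a₁ a₂ T ε * κ + CC a₀ a₁ a₂ T ε) := by
  rw [Qt, hRT]
  simp only [AA, BB, CC]
  ring

theorem hasDeriv_Qt (hRT : ∀ y : ℝ, R y = (y:ℂ)^2 * T y) (κ : ℂ) (ε : ℝ) :
    HasDerivAt (fun γ => Qt r₁ r₂ a₀ a₁ a₂ R γ ε)
      ((ε:ℂ) * (2 * AA r₁ a₂ T ε * κ + BB r₂ a₁ a₂ T ε))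
      (Complex.I/2 + (ε:ℂ) * κ) := by
  set γ0 : ℂ := Complex.I/2 + (ε:ℂ) * κ with hγ0
  have h1 : HasDerivAt (fun γ : ℂ => Complex.I/2 - γ) (-1 : ℂ) γ0 := by
    simpa using (hasDerivAt_id γ0).const_sub (Complex.I/2)
  have hsq : HasDerivAt (fun γ : ℂ => (Complex.I/2 - γ)^2)
      (2*(Complex.I/2 - γ0)^1*(-1)) γ0 := h1.pow 2
  have hmid : HasDerivAt
      (fun γ : ℂ => -(1/8:ℂ) + r₁*(Complex.I/2-γ)^2 + r₂*(Complex.I/2-γ))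
      (r₁*(2*(Complex.I/2-γ0)^1*(-1)) + r₂*(-1)) γ0 :=
    ((hsq.const_mul r₁).const_add (-(1/8))).add (h1.const_mul r₂)
  have hlast : HasDerivAt (fun γ : ℂ => a₀ + a₁*γ + a₂*γ^2)
      (a₁*1 + a₂*(2*γ0^1)) γ0 :=
    (((hasDerivAt_id γ0).const_mul a₁).const_add a₀).add ((hasDerivAt_pow 2 γ0).const_mul a₂)
  have hQ := (hsq.add (hmid.const_mul ((ε:ℂ)^2))).add (hlast.const_mul (R ε))
  have hfun : (fun γ => Qt r₁ r₂ a₀ a₁ a₂ R γ ε) =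
      (fun γ : ℂ => (Complex.I/2 - γ)^2
        + (ε:ℂ)^2 * (-(1/8:ℂ) + r₁*(Complex.I/2-γ)^2 + r₂*(Complex.I/2-γ))
        + R ε * (a₀ + a₁*γ + a₂*γ^2)) := by
    funext γ; rw [Qt]
  rw [hfun]
  refine hQ.congr_deriv ?_
  rw [hRT]
  simp only [AA, BB, hγ0]
  ring

theorem hasDerivAt_wint (h : ℝ → ℂ) (hh : ContDiff ℝ (⊤ : ℕ∞) h) (k : ℕ) (y0 : ℝ) :
    HasDerivAt (fun y : ℝ => ∫ t in (0:ℝ)..1, (t:ℂ)^k * h (t*y))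
      (∫ t in (0:ℝ)..1, (t:ℂ)^(k+1) * deriv h (t*y0)) y0 := by
  have hd : Differentiable ℝ h := hh.differentiable (by simp)
  have hc : Continuous h := hh.continuous
  have hdc : Continuous (deriv h) := hh.continuous_deriv (by simp)
  obtain ⟨M, hM⟩ :=
    (isCompact_closedBall (0:ℝ) (|y0|+1)).exists_bound_of_continuousOn hdc.continuousOn
  have key := intervalIntegral.hasDerivAt_integral_of_dominated_loc_of_deriv_le
    (μ := MeasureTheory.volume) (a := 0) (b := 1) (bound := fun _ => M)
    (F := fun y t => (t:ℂ)^k * h (t*y)) (F' := fun y t => (t:ℂ)^(k+1) * deriv h (t*y))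
    (x₀ := y0) (s := Metric.ball y0 1) (Metric.ball_mem_nhds _ one_pos) ?_ ?_ ?_ ?_ ?_ ?_
  · exact key.2
  · exact Eventually.of_forall fun y =>
      (by fun_prop : Continuous fun t:ℝ => (t:ℂ)^k * h (t*y)).aestronglyMeasurable
  · exact (by fun_prop : Continuous fun t:ℝ => (t:ℂ)^k * h (t*y0)).intervalIntegrable _ _
  · exact (by fun_prop : Continuous fun t:ℝ => (t:ℂ)^(k+1) * deriv h (t*y0)).aestronglyMeasurable
  · refine Eventually.of_forall fun t ht y hy => ?_
    rw [Set.uIoc_of_le zero_le_one] at ht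
    have ht1 : |t| ≤ 1 := abs_le.mpr ⟨by linarith [ht.1], ht.2⟩
    have hy' : |y| ≤ |y0| + 1 := by
      have h1 := Metric.mem_ball.mp hy
      rw [Real.dist_eq] at h1
      have h2 := abs_sub_abs_le_abs_sub y y0
      linarith
    have hty : t*y ∈ Metric.closedBall (0:ℝ) (|y0|+1) := by
      rw [Metric.mem_closedBall, dist_zero_right, Real.norm_eq_abs, abs_mul]
      nlinarith [abs_nonneg t, abs_nonneg y]
    rw [norm_mul, norm_pow, Complex.norm_real, Real.norm_eq_abs]
    have h3 := hM _ hty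
    have hp : |t|^(k+1) ≤ 1 := pow_le_one₀ (abs_nonneg t) ht1
    nlinarith [norm_nonneg (deriv h (t*y)), pow_nonneg (abs_nonneg t) (k+1)]
  · exact intervalIntegrable_const
  · refine Eventually.of_forall fun t ht y hy => ?_
    have h1 : HasDerivAt (fun y : ℝ => h (t*y)) (t • deriv h (t*y)) y := by
      simpa [Function.comp_def] using (hd (t*y)).hasDerivAt.scomp y ((hasDerivAt_id y).const_mul t)
    have h2 := h1.const_mul ((t:ℂ)^k)
    rw [Complex.real_smul] at h2
    refine h2.congr_deriv ?_
    ring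

theorem contDiff_wint (n : ℕ) : ∀ (h : ℝ → ℂ), ContDiff ℝ (⊤ : ℕ∞) h → ∀ k : ℕ,
    ContDiff ℝ n (fun y : ℝ => ∫ t in (0:ℝ)..1, (t:ℂ)^k * h (t*y)) := by
  induction n with
  | zero =>
    intro h hh k
    exact contDiff_zero.2 (continuous_iff_continuousAt.2 fun y =>
      (hasDerivAt_wint h hh k y).continuousAt)
  | succ n ih =>
    intro h hh k
    have hderiv : deriv (fun y : ℝ => ∫ t in (0:ℝ)..1, (t:ℂ)^k * h (t*y)) =
        fun y => ∫ t in (0:ℝ)..1, (t:ℂ)^(k+1) * deriv h (t*y) :=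
      funext fun y => (hasDerivAt_wint h hh k y).deriv
    push_cast
    rw [contDiff_succ_iff_deriv]
    refine ⟨fun y => (hasDerivAt_wint h hh k y).differentiableAt, by simp, ?_⟩
    rw [hderiv]
    exact ih _ (contDiff_infty_iff_deriv.mp hh).2 (k+1)

theorem dslope_eq_wint (f : ℝ → ℂ) (hf : ContDiff ℝ (⊤ : ℕ∞) f) (y : ℝ) :
    dslope f 0 y = ∫ t in (0:ℝ)..1, (t:ℂ)^0 * deriv f (t*y) := by
  rcases eq_or_ne y 0 with rfl | hy
  · simp [dslope_same]
  · rw [dslope_of_ne _ hy, slope_def_module]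
    simp only [pow_zero, one_mul]
    rw [intervalIntegral.integral_comp_mul_right (fun x => deriv f x) hy, zero_mul, one_mul,
      intervalIntegral.integral_deriv_eq_sub (fun x _ => hf.differentiable (by simp) x)
        ((hf.continuous_deriv (by simp)).intervalIntegrable _ _), sub_zero]

theorem contDiff_dslope (f : ℝ → ℂ) (hf : ContDiff ℝ (⊤ : ℕ∞) f) :
    ContDiff ℝ (⊤ : ℕ∞) (dslope f 0) := by
  have : dslope f 0 = fun y : ℝ => ∫ t in (0:ℝ)..1, (t:ℂ)^0 * deriv f (t*y) :=
    funext (dslope_eq_wint f hf)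
  rw [this, contDiff_infty]
  intro n
  exact contDiff_wint n _ (contDiff_infty_iff_deriv.mp hf).2 0

end S15

/-- for `R(ε) = O(ε³)` smooth, the double root `i/2` of `Q̃(·;0)` bifurcates
into two simple roots `γ_±(ε) = i/2 + ε·κ_±(ε)` with `κ_±` smooth and
`κ_±(0) = ±1/(2√2)`. -/
theorem statement15 (r₁ r₂ a₀ a₁ a₂ : ℂ) (R : ℝ → ℂ)
    (hR : ContDiff ℝ (⊤ : ℕ∞) R) (hR0 : R 0 = 0) (hR1 : deriv R 0 = 0)
    (hR2 : deriv (deriv R) 0 = 0) :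
    ∃ ε₀ : ℝ, 0 < ε₀ ∧
    ∃ κp κm : ℝ → ℂ,
      ContDiffOn ℝ (⊤ : ℕ∞) κp (Set.Ioo (-ε₀) ε₀) ∧
      ContDiffOn ℝ (⊤ : ℕ∞) κm (Set.Ioo (-ε₀) ε₀) ∧
      κp 0 = ((1 / (2 * Real.sqrt 2) : ℝ) : ℂ) ∧
      κm 0 = ((-(1 / (2 * Real.sqrt 2)) : ℝ) : ℂ) ∧
      ∀ ε : ℝ, 0 < |ε| → |ε| < ε₀ →
        (Complex.I / 2 + (ε : ℂ) * κp ε ≠ Complex.I / 2 + (ε : ℂ) * κm ε) ∧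
        Qt r₁ r₂ a₀ a₁ a₂ R (Complex.I / 2 + (ε : ℂ) * κp ε) ε = 0 ∧
        Qt r₁ r₂ a₀ a₁ a₂ R (Complex.I / 2 + (ε : ℂ) * κm ε) ε = 0 ∧
        deriv (fun γ => Qt r₁ r₂ a₀ a₁ a₂ R γ ε) (Complex.I / 2 + (ε : ℂ) * κp ε) ≠ 0 ∧
        deriv (fun γ => Qt r₁ r₂ a₀ a₁ a₂ R γ ε) (Complex.I / 2 + (ε : ℂ) * κm ε) ≠ 0 := by
  classical
  open Filter Topology in
  -- the function T with R ε = ε² T ε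
  set T : ℝ → ℂ := dslope (dslope R 0) 0 with hTdef
  have hg0 : dslope R 0 0 = 0 := by rw [dslope_same]; exact hR1
  have key : ∀ f : ℝ → ℂ, f 0 = 0 → ∀ y : ℝ, f y = (y:ℂ) * dslope f 0 y := by
    intro f hf y
    rcases eq_or_ne y 0 with rfl | hy
    · simp [hf]
    · have hyC : (y:ℂ) ≠ 0 := Complex.ofReal_ne_zero.2 hy
      rw [dslope_of_ne _ hy]
      simp only [slope, vsub_eq_sub, hf, sub_zero]
      rw [Complex.real_smul]
      push_cast
      field_simp
  have hgy : ∀ y : ℝ, R y = (y:ℂ) * dslope R 0 y := key R hR0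
  have hty : ∀ y : ℝ, dslope R 0 y = (y:ℂ) * T y := key (dslope R 0) hg0
  have hRT : ∀ y : ℝ, R y = (y:ℂ)^2 * T y := by
    intro y; rw [hgy y, hty y]; ring
  -- analyticity of T
  have hof : ∀ x : ℝ, ContDiffAt ℝ (⊤ : ℕ∞) (fun y : ℝ => ((y:ℝ):ℂ)) x := fun x =>
    Complex.ofRealCLM.contDiff.contDiffAt
  have hTsm : ContDiff ℝ (⊤ : ℕ∞) T := S15.contDiff_dslope _ (S15.contDiff_dslope R hR)
  have hTan : ∀ x : ℝ, ContDiffAt ℝ (⊤ : ℕ∞) T x := fun x => hTsm.contDiffAt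
  -- T 0 = 0
  have hT0 : T 0 = 0 := by
    have hg : dslope R 0 = fun y : ℝ => ∫ t in (0:ℝ)..1, (t:ℂ)^0 * deriv R (t*y) :=
      funext (S15.dslope_eq_wint R hR)
    rw [hTdef, dslope_same, hg,
      (S15.hasDerivAt_wint (deriv R) (contDiff_infty_iff_deriv.mp hR).2 0 0).deriv]
    simp [hR2]
  -- abbreviations
  set Af : ℝ → ℂ := S15.AA r₁ a₂ T with hAf
  set Bf : ℝ → ℂ := S15.BB r₂ a₁ a₂ T with hBf
  set Cf : ℝ → ℂ := S15.CC a₀ a₁ a₂ T with hCf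
  set Df : ℝ → ℂ := S15.DD r₁ r₂ a₀ a₁ a₂ T with hDf
  set sf : ℝ → ℂ := S15.ss r₁ r₂ a₀ a₁ a₂ T with hsf
  have hAan : ∀ x : ℝ, ContDiffAt ℝ (⊤ : ℕ∞) Af x := fun x => by
    rw [hAf]; unfold S15.AA
    exact (contDiffAt_const.add (contDiffAt_const.mul ((hof x).pow 2))).add
      ((contDiffAt_const.mul ((hof x).pow 2)).mul (hTan x))
  have hBan : ∀ x : ℝ, ContDiffAt ℝ (⊤ : ℕ∞) Bf x := fun x => by
    rw [hBf]; unfold S15.BB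
    exact ((contDiffAt_const.mul (hof x))).add
      ((contDiffAt_const.mul (hof x)).mul (hTan x))
  have hCan : ∀ x : ℝ, ContDiffAt ℝ (⊤ : ℕ∞) Cf x := fun x => by
    rw [hCf]; unfold S15.CC
    exact contDiffAt_const.add (contDiffAt_const.mul (hTan x))
  have hDan : ∀ x : ℝ, ContDiffAt ℝ (⊤ : ℕ∞) Df x := fun x => by
    rw [hDf]; unfold S15.DD
    exact ((hBan x).pow 2).sub ((contDiffAt_const.mul (hAan x)).mul (hCan x))
  -- values at 0
  have hA0 : Af 0 = 1 := by rw [hAf]; unfold S15.AA; simp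
  have hB0 : Bf 0 = 0 := by rw [hBf]; unfold S15.BB; simp
  have hC0 : Cf 0 = -(1/8) := by rw [hCf]; unfold S15.CC; simp [hT0]
  have hD0 : Df 0 = 1/2 := by
    rw [hDf]; unfold S15.DD
    rw [← hAf, ← hBf, ← hCf, hA0, hB0, hC0]; norm_num
  -- choice of ε₀
  have hDcont : Continuous fun ε => (Df ε).re :=
    Complex.continuous_re.comp (continuous_iff_continuousAt.2 fun x => (hDan x).continuousAt)
  have hAcont : Continuous fun ε => (Af ε).re :=
    Complex.continuous_re.comp (continuous_iff_continuousAt.2 fun x => (hAan x).continuousAt)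
  have hUopen : IsOpen {ε : ℝ | 0 < (Df ε).re ∧ 0 < (Af ε).re} :=
    (isOpen_lt continuous_const hDcont).inter (isOpen_lt continuous_const hAcont)
  have h0U : (0:ℝ) ∈ {ε : ℝ | 0 < (Df ε).re ∧ 0 < (Af ε).re} := by
    constructor
    · rw [hD0]; norm_num
    · rw [hA0]; norm_num
  obtain ⟨ε₀, hε₀pos, hball⟩ := Metric.mem_nhds_iff.mp (hUopen.mem_nhds h0U)
  have hIooU : Set.Ioo (-ε₀) ε₀ ⊆ {ε : ℝ | 0 < (Df ε).re ∧ 0 < (Af ε).re} := by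
    intro x hx
    apply hball
    rw [Real.ball_eq_Ioo]
    simpa using hx
  -- properties on the interval
  have hmem : ∀ x ∈ Set.Ioo (-ε₀) ε₀, Af x ≠ 0 ∧ Df x ∈ Complex.slitPlane ∧ Df x ≠ 0 := by
    intro x hx
    obtain ⟨hD, hA⟩ := hIooU hx
    refine ⟨fun h => by simp [h] at hA, Complex.mem_slitPlane_iff.mpr (Or.inl hD), ?_⟩
    intro h; simp [h] at hD
  have hsan : ∀ x ∈ Set.Ioo (-ε₀) ε₀, ContDiffAt ℝ (⊤ : ℕ∞) sf x := by
    intro x hx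
    rw [hsf]; unfold S15.ss
    have hlog : ContDiffAt ℝ (⊤ : ℕ∞) (fun ε => Complex.log (S15.DD r₁ r₂ a₀ a₁ a₂ T ε)) x := by
      have := (((analyticAt_clog (hmem x hx).2.1).restrictScalars (𝕜 := ℝ)).contDiffAt
        (n := (⊤ : ℕ∞))).comp x (hDan x)
      simpa [hDf, Function.comp_def] using this
    have hdiv : ContDiffAt ℝ (⊤ : ℕ∞) (fun ε => Complex.log (S15.DD r₁ r₂ a₀ a₁ a₂ T ε) / 2) x :=
      hlog.div_const 2
    exact ((analyticAt_cexp.restrictScalars (𝕜 := ℝ)).contDiffAt (n := (⊤ : ℕ∞))).comp x hdiv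
  -- the two root functions
  set kpf : ℝ → ℂ := fun ε => (-Bf ε + sf ε) / (2 * Af ε) with hkpf
  set kmf : ℝ → ℂ := fun ε => (-Bf ε - sf ε) / (2 * Af ε) with hkmf
  have hkpε : ∀ x : ℝ, kpf x = (-Bf x + sf x) / (2 * Af x) := fun x => rfl
  have hkmε : ∀ x : ℝ, kmf x = (-Bf x - sf x) / (2 * Af x) := fun x => rfl
  refine ⟨ε₀, hε₀pos, kpf, kmf, ?_, ?_, ?_, ?_, ?_⟩
  · intro x hx
    refine ContDiffAt.contDiffWithinAt ?_
    rw [hkpf]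
    simp only [div_eq_mul_inv]
    exact (((hBan x).neg.add (hsan x hx)).mul
      ((contDiffAt_const.mul (hAan x)).inv (by
        simpa using mul_ne_zero (two_ne_zero (α := ℂ)) (hmem x hx).1)))
  · intro x hx
    refine ContDiffAt.contDiffWithinAt ?_
    rw [hkmf]
    simp only [div_eq_mul_inv]
    exact (((hBan x).neg.sub (hsan x hx)).mul
      ((contDiffAt_const.mul (hAan x)).inv (by
        simpa using mul_ne_zero (two_ne_zero (α := ℂ)) (hmem x hx).1)))
  · -- value of κp at 0
    have hss0 : sf 0 = (((Real.sqrt 2)⁻¹ : ℝ) : ℂ) := by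
      rw [hsf]; unfold S15.ss
      rw [← hDf, hD0]
      rw [show ((1:ℂ)/2) = (((1/2 : ℝ)):ℂ) by norm_num,
        ← Complex.ofReal_log (by norm_num : (0:ℝ) ≤ 1/2),
        show ((Real.log (1/2) : ℝ):ℂ)/2 = ((Real.log (1/2)/2 : ℝ):ℂ) by push_cast; ring,
        ← Complex.ofReal_exp]
      norm_cast
      rw [show Real.log (1/2)/2 = Real.log (1/2) * (1/2:ℝ) by ring,
        ← Real.rpow_def_of_pos (by norm_num), ← Real.sqrt_eq_rpow, one_div, Real.sqrt_inv]
    rw [hkpε 0, hB0, hss0, hA0]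
    rw [show (1/(2*Real.sqrt 2) : ℝ) = (Real.sqrt 2)⁻¹/2 by ring]
    push_cast
    ring
  · have hss0 : sf 0 = (((Real.sqrt 2)⁻¹ : ℝ) : ℂ) := by
      rw [hsf]; unfold S15.ss
      rw [← hDf, hD0]
      rw [show ((1:ℂ)/2) = (((1/2 : ℝ)):ℂ) by norm_num,
        ← Complex.ofReal_log (by norm_num : (0:ℝ) ≤ 1/2),
        show ((Real.log (1/2) : ℝ):ℂ)/2 = ((Real.log (1/2)/2 : ℝ):ℂ) by push_cast; ring,
        ← Complex.ofReal_exp]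
      norm_cast
      rw [show Real.log (1/2)/2 = Real.log (1/2) * (1/2:ℝ) by ring,
        ← Real.rpow_def_of_pos (by norm_num), ← Real.sqrt_eq_rpow, one_div, Real.sqrt_inv]
    rw [hkmε 0, hB0, hss0, hA0]
    rw [show (-(1/(2*Real.sqrt 2)) : ℝ) = -((Real.sqrt 2)⁻¹/2) by ring]
    push_cast
    ring
  · -- the main root properties
    intro ε hε0 hεε₀
    have hεne : ε ≠ 0 := by
      intro h; rw [h] at hε0; simp at hε0
    have hεC : (ε:ℂ) ≠ 0 := Complex.ofReal_ne_zero.2 hεne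
    have hxIoo : ε ∈ Set.Ioo (-ε₀) ε₀ := by
      rcases abs_lt.mp hεε₀ with ⟨h1, h2⟩; exact ⟨h1, h2⟩
    obtain ⟨hAne, hslit, hDne⟩ := hmem ε hxIoo
    have hsne : sf ε ≠ 0 := by rw [hsf]; unfold S15.ss; exact Complex.exp_ne_zero _
    have hs2 : sf ε^2 = Df ε := by
      rw [hsf, hDf]; unfold S15.ss
      rw [show Complex.exp (Complex.log (S15.DD r₁ r₂ a₀ a₁ a₂ T ε) / 2) ^ 2
          = Complex.exp (Complex.log (S15.DD r₁ r₂ a₀ a₁ a₂ T ε) / 2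
            + Complex.log (S15.DD r₁ r₂ a₀ a₁ a₂ T ε) / 2) by rw [Complex.exp_add]; ring,
        show Complex.log (S15.DD r₁ r₂ a₀ a₁ a₂ T ε) / 2
            + Complex.log (S15.DD r₁ r₂ a₀ a₁ a₂ T ε) / 2
          = Complex.log (S15.DD r₁ r₂ a₀ a₁ a₂ T ε) by ring]
      exact Complex.exp_log (by rw [← hDf]; exact hDne)
    have hs2' : sf ε^2 = Bf ε^2 - 4 * Af ε * Cf ε := by
      rw [hs2, hDf]; unfold S15.DD; rw [← hAf, ← hBf, ← hCf]
    have hκp : kpf ε = (-Bf ε + sf ε) / (2 * Af ε) := hkpε ε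
    have hκm : kmf ε = (-Bf ε - sf ε) / (2 * Af ε) := hkmε ε
    set κp : ℂ := kpf ε
    set κm : ℂ := kmf ε
    have h2A : (2:ℂ) * Af ε ≠ 0 := mul_ne_zero two_ne_zero hAne
    have hκpsub : 2 * Af ε * κp + Bf ε = sf ε := by
      rw [hκp]; field_simp; ring
    have hκmsub : 2 * Af ε * κm + Bf ε = -sf ε := by
      rw [hκm]; field_simp; ring
    have hqp : Af ε * κp^2 + Bf ε * κp + Cf ε = 0 := by
      have h4 : (4 * Af ε) * (Af ε * κp^2 + Bf ε * κp + Cf ε) = 0 := by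
        linear_combination (2 * Af ε * κp + Bf ε + sf ε) * hκpsub + hs2'
      rcases mul_eq_zero.mp h4 with h | h
      · exact absurd h (by simpa using hAne)
      · exact h
    have hqm : Af ε * κm^2 + Bf ε * κm + Cf ε = 0 := by
      have h4 : (4 * Af ε) * (Af ε * κm^2 + Bf ε * κm + Cf ε) = 0 := by
        linear_combination (2 * Af ε * κm + Bf ε - sf ε) * hκmsub + hs2'
      rcases mul_eq_zero.mp h4 with h | h
      · exact absurd h (by simpa using hAne)
      · exact h
    refine ⟨?_, ?_, ?_, ?_, ?_⟩
    · -- distinctness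
      intro h
      have h1 : (ε:ℂ) * κp = (ε:ℂ) * κm := by
        have := add_left_cancel h
        exact this
      have h2 : κp = κm := mul_left_cancel₀ hεC h1
      have h3 : sf ε = 0 := by
        have := h2
        rw [hκp, hκm, div_eq_div_iff h2A h2A] at this
        have h4 : (-Bf ε + sf ε) = (-Bf ε - sf ε) := mul_right_cancel₀ h2A this
        linear_combination h4 / 2
      exact hsne h3
    · rw [S15.quad_eval hRT κp ε, ← hAf, ← hBf, ← hCf, hqp, mul_zero]
    · rw [S15.quad_eval hRT κm ε, ← hAf, ← hBf, ← hCf, hqm, mul_zero]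
    · have hd := (S15.hasDeriv_Qt (r₁:=r₁) (r₂:=r₂) (a₀:=a₀) (a₁:=a₁) (a₂:=a₂) hRT κp ε).deriv
      rw [hd, ← hAf, ← hBf, hκpsub]
      exact mul_ne_zero hεC hsne
    · have hd := (S15.hasDeriv_Qt (r₁:=r₁) (r₂:=r₂) (a₀:=a₀) (a₁:=a₁) (a₂:=a₂) hRT κm ε).deriv
      rw [hd, ← hAf, ← hBf, hκmsub]
      exact mul_ne_zero hεC (neg_ne_zero.2 hsne)
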